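/- Let ℱ be a free ultrafilter on ℕ, let (𝒢_k) be a sequence of free ultrafilters on ℕ, and let (θ_k) be a sequence in (0,1) with θ_k → 1⁻. Then (1) the map f(x) = ℱ-lim_k ( 𝒢_k-lim_n Θ_{θ_k,n}(x) ) is a positive continuous linear functional on ℓ∞ extending the Cesàro mean; and (2) for every fixed x ∈ ℓ∞ and every k there exists a free ultrafilter 𝒢_k with limsup_{n→∞} Θ_{θ_k,n}(x) = 𝒢_k-lim_n Θ_{θ_k,n}(x). -/

import Mathlib

open Filter Topology

noncomputable section

/-- The space `ℓ∞` of bounded real sequences. -/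
abbrev EllInfty : Type := lp (fun _ : ℕ => ℝ) ⊤

/-- The characteristic sequence of a set `A ⊆ ℕ` (as a plain function). -/
def chiFun (A : Set ℕ) : ℕ → ℝ := A.indicator 1

lemma chiFun_memℓp (A : Set ℕ) : Memℓp (chiFun A) ⊤ := by
  apply memℓp_infty
  refine ⟨1, ?_⟩
  rintro r ⟨n, rfl⟩
  by_cases h : n ∈ A <;> simp [chiFun, Set.indicator, h]

/-- The characteristic sequence of a set `A ⊆ ℕ` as an element of `ℓ∞`. -/
def chi (A : Set ℕ) : EllInfty := ⟨chiFun A, chiFun_memℓp A⟩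

/-- `A(n) = |A ∩ {1,…,n}|` (as a real number). -/
def count (A : Set ℕ) (n : ℕ) : ℝ := ∑ k ∈ Finset.Icc 1 n, chiFun A k

/-- `A` has asymptotic density `d`, i.e. `A(n)/n → d`. -/
def HasDensity (A : Set ℕ) (d : ℝ) : Prop :=
  Tendsto (fun n => count A n / n) atTop (𝓝 d)

/-- A density measure: a finitely additive measure `μ : 𝒫(ℕ) → [0,1]` with `μ(ℕ) = 1`
which extends the asymptotic density. -/
def IsDensityMeasure (μ : Set ℕ → ℝ) : Prop :=
  (∀ A B : Set ℕ, Disjoint A B → μ (A ∪ B) = μ A + μ B) ∧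
  (∀ A : Set ℕ, μ A ∈ Set.Icc (0 : ℝ) 1) ∧
  μ Set.univ = 1 ∧
  (∀ A d, HasDensity A d → μ A = d)

/-- The sequence of Cesàro averages `(x₁ + … + xₙ)/n`. -/
def cesaroAvg (x : ℕ → ℝ) (n : ℕ) : ℝ := (∑ i ∈ Finset.Icc 1 n, x i) / n

/-- `x` has Cesàro mean `c`. -/
def HasCesaro (x : ℕ → ℝ) (c : ℝ) : Prop := Tendsto (cesaroAvg x) atTop (𝓝 c)

/-- A functional on `ℓ∞` is positive if it is nonnegative on nonnegative sequences. -/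
def IsPositiveFunctional (f : EllInfty → ℝ) : Prop :=
  ∀ x : EllInfty, (∀ n, 0 ≤ x n) → 0 ≤ f x

/-- A functional on `ℓ∞` extends the Cesàro mean. -/
def ExtendsCesaro (f : EllInfty → ℝ) : Prop :=
  ∀ (x : EllInfty) (c : ℝ), HasCesaro (⇑x) c → f x = c

/-- The set of positive continuous linear functionals on `ℓ∞` extending the Cesàro mean. -/
def Cesex : Set (EllInfty →L[ℝ] ℝ) :=
  {f | IsPositiveFunctional f ∧ ExtendsCesaro f}

/-- `f_C(x) = sup { f(x) : f ∈ Cesex }`. -/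
def fC (x : EllInfty) : ℝ := sSup ((fun f : EllInfty →L[ℝ] ℝ => f x) '' Cesex)

/-- `Θ_{θ,n}(x) = (Σ_{θn < i ≤ n} x_i) / (n(1-θ))`. -/
def Theta (x : ℕ → ℝ) (θ : ℝ) (n : ℕ) : ℝ :=
  (∑ i ∈ Finset.Icc 1 n, if θ * n < (i : ℝ) then x i else 0) / (n * (1 - θ))

/-- `Θ_θ(x) = limsup_{n → ∞} Θ_{θ,n}(x)`. -/
def ThetaSup (x : ℕ → ℝ) (θ : ℝ) : ℝ := limsup (Theta x θ) atTop

/-- `t(x) = lim_{θ → 1⁻} Θ_θ(x)`. -/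
def tFun (x : ℕ → ℝ) : ℝ := limUnder (𝓝[<] (1 : ℝ)) (ThetaSup x)

/-- `A_α(n) = Σ_{k ∈ A, k ≤ n} k^α`. -/
def aSum (A : Set ℕ) (α : ℝ) (n : ℕ) : ℝ :=
  ∑ k ∈ Finset.Icc 1 n, chiFun A k * (k : ℝ) ^ α

/-- The upper `α`-density `d̄_α(A) = limsup_{n→∞} A_α(n)/ℕ_α(n)`. -/
def upperADens (A : Set ℕ) (α : ℝ) : ℝ :=
  limsup (fun n => aSum A α n / aSum Set.univ α n) atTop

/-- The lower `α`-density `d̲_α(A) = liminf_{n→∞} A_α(n)/ℕ_α(n)`. -/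
def lowerADens (A : Set ℕ) (α : ℝ) : ℝ :=
  liminf (fun n => aSum A α n / aSum Set.univ α n) atTop

/-- `d̄_∞(A) = lim_{α→∞} d̄_α(A)`. -/
def dInftyUpper (A : Set ℕ) : ℝ := limUnder (atTop : Filter ℝ) (upperADens A)

/-- `d̲_∞(A) = lim_{α→∞} d̲_α(A)`. -/
def dInftyLower (A : Set ℕ) : ℝ := limUnder (atTop : Filter ℝ) (lowerADens A)

/-- The quotient `(A(n) - A(⌊θn⌋))/(n - θn)` appearing in the Pólya density. -/
def polyaQuot (A : Set ℕ) (θ : ℝ) (n : ℕ) : ℝ :=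
  (count A n - count A ⌊θ * n⌋₊) / (n - θ * n)

/-- The upper Pólya density `p̄(A)`. -/
def pUpper (A : Set ℕ) : ℝ :=
  limUnder (𝓝[<] (1 : ℝ)) (fun θ => limsup (polyaQuot A θ) atTop)

/-- The lower Pólya density `p̲(A)`. -/
def pLower (A : Set ℕ) : ℝ :=
  limUnder (𝓝[<] (1 : ℝ)) (fun θ => liminf (polyaQuot A θ) atTop)

/-- `λ̄(A) = sup { μ(A) : μ a density measure }`. -/
def lamUpper (A : Set ℕ) : ℝ := sSup {r | ∃ μ, IsDensityMeasure μ ∧ μ A = r}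

/-- `λ̲(A) = inf { μ(A) : μ a density measure }`. -/
def lamLower (A : Set ℕ) : ℝ := sInf {r | ∃ μ, IsDensityMeasure μ ∧ μ A = r}

/-- `d̄*(A) = inf { d(B) : B ⊇ A, B ∈ 𝒟 }`. -/
def dUpperStar (A : Set ℕ) : ℝ := sInf {r | ∃ B, A ⊆ B ∧ HasDensity B r}

/-- `d̲*(A) = sup { d(B) : B ⊆ A, B ∈ 𝒟 }`. -/
def dLowerStar (A : Set ℕ) : ℝ := sSup {r | ∃ B, B ⊆ A ∧ HasDensity B r}

/-- The `ℱ`-limit of a (bounded) real sequence along an ultrafilter `ℱ`: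
the unique `L` with `Tendsto x ℱ (𝓝 L)` (when it exists). -/
def ulim (F : Ultrafilter ℕ) (x : ℕ → ℝ) : ℝ := limUnder (F : Filter ℕ) x

/-- An ultrafilter is free (non-principal) iff it contains all cofinite sets. -/
def IsFreeUltrafilter (F : Ultrafilter ℕ) : Prop := (F : Filter ℕ) ≤ Filter.cofinite

/-- The set of positive functionals extending Cesàro mean, inside the weak-* dual of `ℓ∞`. -/
def CesexW : Set (WeakDual ℝ EllInfty) :=
  {f | (∀ x : EllInfty, (∀ n, 0 ≤ x n) → 0 ≤ f x) ∧
    ∀ (x : EllInfty) (c : ℝ), HasCesaro (⇑x) c → f x = c}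

/-!
Each `Θ_{θ,n}` is a continuous linear functional on `ℓ∞` of norm at most `1/(1-θ)`. Along an
ultrafilter, a norm-bounded family of functionals converges pointwise (bounded intervals are
compact) to a continuous linear functional, and positivity passes to the limit. Since
`Θ_{θ,n}(x) → C(x)` whenever the Cesàro mean exists, the limit along a free ultrafilter extends
the Cesàro mean. A positive functional `f` has norm `f(1)`, so these limits have norm `1`
uniformly in `θ`, which is what allows the second ultrafilter limit over `k`. For (2), the
`limsup` of a bounded sequence is one of its cluster points at infinity, hence its limit along a
free ultrafilter.
-/

open Finset in
lemma sum_Icc_ite_lt_eq_sub (x : ℕ → ℝ) {θ : ℝ} (hθ0 : 0 ≤ θ) (hθ1 : θ ≤ 1) (n : ℕ) :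
    (∑ i ∈ Icc 1 n, if θ * n < (i : ℝ) then x i else 0)
      = ∑ i ∈ Icc 1 n, x i - ∑ i ∈ Icc 1 ⌊θ * n⌋₊, x i := by
  have hsub : Icc 1 ⌊θ * n⌋₊ ⊆ Icc 1 n :=
    Icc_subset_Icc_right (Nat.floor_le_of_le (mul_le_of_le_one_left n.cast_nonneg hθ1))
  rw [← sum_sdiff_eq_sub hsub, ← sum_filter]
  congr 1
  ext i
  simp only [mem_filter, Finset.mem_sdiff, mem_Icc, ← Nat.floor_lt (by positivity : 0 ≤ θ * n)]
  omega

lemma sum_Icc_eq_mul_cesaroAvg (x : ℕ → ℝ) (n : ℕ) :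
    ∑ i ∈ Finset.Icc 1 n, x i = n * cesaroAvg x n := by
  rcases n.eq_zero_or_pos with rfl | hn
  · simp
  · exact (mul_div_cancel₀ _ (by positivity)).symm

lemma hasCesaro_const (c : ℝ) : HasCesaro (fun _ => c) c := by
  refine tendsto_const_nhds.congr' ?_
  filter_upwards [eventually_ne_atTop 0] with n hn
  simp [cesaroAvg, hn]

lemma Theta_eq_cesaroAvg (x : ℕ → ℝ) {θ : ℝ} (hθ0 : 0 ≤ θ) (hθ1 : θ < 1) {n : ℕ} (hn : n ≠ 0) :
    Theta x θ n
      = (cesaroAvg x n - ⌊θ * n⌋₊ / n * cesaroAvg x ⌊θ * n⌋₊) / (1 - θ) := by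
  have : (1 : ℝ) - θ ≠ 0 := by linarith
  rw [Theta, sum_Icc_ite_lt_eq_sub x hθ0 hθ1.le, sum_Icc_eq_mul_cesaroAvg,
    sum_Icc_eq_mul_cesaroAvg]
  field_simp

lemma tendsto_Theta_of_hasCesaro {x : ℕ → ℝ} {c θ : ℝ} (hθ : θ ∈ Set.Ioo 0 1)
    (hc : HasCesaro x c) : Tendsto (Theta x θ) atTop (𝓝 c) := by
  have hratio : Tendsto (fun n : ℕ => (⌊θ * n⌋₊ : ℝ) / n) atTop (𝓝 θ) :=
    (tendsto_nat_floor_mul_div_atTop hθ.1.le).comp tendsto_natCast_atTop_atTop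
  have hlim := (hc.sub (hratio.mul (hc.comp (tendsto_nat_floor_mul_atTop θ hθ.1)))).div_const
    (1 - θ)
  rw [show (c - θ * c) / (1 - θ) = c by field_simp [(sub_pos.2 hθ.2).ne']] at hlim
  refine hlim.congr' ?_
  filter_upwards [eventually_ne_atTop 0] with n hn
  exact (Theta_eq_cesaroAvg x hθ.1.le hθ.2 hn).symm

lemma Theta_add (x y : ℕ → ℝ) (θ : ℝ) (n : ℕ) :
    Theta (x + y) θ n = Theta x θ n + Theta y θ n := by
  rw [Theta, Theta, Theta, ← add_div, ← Finset.sum_add_distrib]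
  congr 1
  refine Finset.sum_congr rfl fun i _ => ?_
  split_ifs <;> simp

lemma Theta_smul (c : ℝ) (x : ℕ → ℝ) (θ : ℝ) (n : ℕ) :
    Theta (c • x) θ n = c * Theta x θ n := by
  rw [Theta, Theta, ← mul_div_assoc, Finset.mul_sum]
  congr 1
  refine Finset.sum_congr rfl fun i _ => ?_
  split_ifs <;> simp

lemma Theta_nonneg {x : ℕ → ℝ} {θ : ℝ} (hθ : θ ≤ 1) (hx : ∀ i, 0 ≤ x i) (n : ℕ) :
    0 ≤ Theta x θ n := by
  have : 0 ≤ 1 - θ := by linarith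
  refine div_nonneg (Finset.sum_nonneg fun i _ => ?_) (by positivity)
  split_ifs
  exacts [hx i, le_rfl]

lemma abs_Theta_le {x : ℕ → ℝ} {θ C : ℝ} (hθ : θ < 1) (hx : ∀ i, |x i| ≤ C) (n : ℕ) :
    |Theta x θ n| ≤ C / (1 - θ) := by
  have hC : 0 ≤ C := (abs_nonneg _).trans (hx 0)
  have h1θ : 0 < 1 - θ := by linarith
  rcases n.eq_zero_or_pos with rfl | hn
  · simpa [Theta] using div_nonneg hC h1θ.le
  have hpos : (0 : ℝ) < n * (1 - θ) := by positivity
  have hsum : |∑ i ∈ Finset.Icc 1 n, if θ * n < (i : ℝ) then x i else 0| ≤ n * C :=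
    calc _ ≤ ∑ i ∈ Finset.Icc 1 n, C := (Finset.abs_sum_le_sum_abs _ _).trans <|
            Finset.sum_le_sum fun i _ => by split_ifs; exacts [hx i, by simpa using hC]
      _ = n * C := by simp
  rw [Theta, abs_div, abs_of_pos hpos, div_le_div_iff₀ hpos h1θ]
  nlinarith

lemma abs_apply_le_norm (x : EllInfty) (i : ℕ) : |x i| ≤ ‖x‖ :=
  lp.norm_apply_le_norm ENNReal.top_ne_zero x i

def thetaCLM (θ : ℝ) (hθ : θ < 1) (n : ℕ) : EllInfty →L[ℝ] ℝ :=
  LinearMap.mkContinuous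
    { toFun := fun x => Theta x θ n
      map_add' := fun x y => by simp only [lp.coeFn_add, Theta_add]
      map_smul' := fun c x => by simp only [lp.coeFn_smul, Theta_smul, smul_eq_mul,
        RingHom.id_apply] }
    (1 - θ)⁻¹ fun x => by
      rw [Real.norm_eq_abs, ← div_eq_inv_mul]
      exact abs_Theta_le hθ (abs_apply_le_norm x) n

lemma norm_thetaCLM_le {θ : ℝ} (hθ : θ < 1) (n : ℕ) : ‖thetaCLM θ hθ n‖ ≤ (1 - θ)⁻¹ :=
  LinearMap.mkContinuous_norm_le _ (inv_nonneg.2 (sub_nonneg.2 hθ.le)) _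

theorem exists_tendsto_of_norm_le {ι E : Type*} [NormedAddCommGroup E] [NormedSpace ℝ E]
    (U : Ultrafilter ι) (g : ι → E →L[ℝ] ℝ) {C : ℝ} (hg : ∀ i, ‖g i‖ ≤ C) :
    ∃ f : E →L[ℝ] ℝ, ∀ x, Tendsto (fun i => g i x) U (𝓝 (f x)) := by
  have hlim : ∀ x, ∃ a, Tendsto (fun i => g i x) U (𝓝 a) := fun x => by
    have hball : ↑(U.map fun i => g i x) ≤ 𝓟 (Metric.closedBall (0 : ℝ) (C * ‖x‖)) :=
      le_principal_iff.2 <| Ultrafilter.mem_map.2 <| univ_mem' fun i => by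
        simpa using (g i).le_of_opNorm_le (hg i) x
    obtain ⟨a, -, ha⟩ := (isCompact_closedBall _ _).ultrafilter_le_nhds _ hball
    exact ⟨a, ha⟩
  choose f hf using hlim
  refine ⟨ContinuousLinearMap.ofTendstoOfBoundedRange f g (tendsto_pi_nhds.2 hf) ?_, hf⟩
  exact isBounded_iff_forall_norm_le.2 ⟨C, by rintro _ ⟨i, rfl⟩; exact hg i⟩

lemma IsPositiveFunctional.of_tendsto {ι : Type*} {l : Filter ι} [l.NeBot]
    {g : ι → EllInfty → ℝ} {f : EllInfty → ℝ} (hg : ∀ i, IsPositiveFunctional (g i))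
    (hf : ∀ x, Tendsto (fun i => g i x) l (𝓝 (f x))) : IsPositiveFunctional f :=
  fun x hx => ge_of_tendsto' (hf x) fun i => hg i x hx

lemma IsPositiveFunctional.norm_le {f : EllInfty →L[ℝ] ℝ} (hf : IsPositiveFunctional f) :
    ‖f‖ ≤ f 1 := by
  refine f.opNorm_le_bound (hf 1 fun n => by simp [lp.infty_coeFn_one]) fun x => ?_
  have hle : 0 ≤ f (‖x‖ • 1 - x) := hf _ fun n => by
    rw [lp.coeFn_sub, lp.coeFn_smul, lp.infty_coeFn_one]
    simpa using (le_abs_self (x n)).trans (abs_apply_le_norm x n)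
  have hge : 0 ≤ f (‖x‖ • 1 + x) := hf _ fun n => by
    rw [lp.coeFn_add, lp.coeFn_smul, lp.infty_coeFn_one]
    simpa [neg_le_iff_add_nonneg'] using
      (neg_abs_le (x n)).trans' (neg_le_neg (abs_apply_le_norm x n))
  rw [map_sub, map_smul, smul_eq_mul] at hle
  rw [map_add, map_smul, smul_eq_mul] at hge
  rw [Real.norm_eq_abs, abs_le]
  constructor <;> nlinarith

lemma ExtendsCesaro.map_one {f : EllInfty → ℝ} (hf : ExtendsCesaro f) : f 1 = 1 :=
  hf 1 1 (by rw [lp.infty_coeFn_one]; exact hasCesaro_const 1)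

lemma norm_le_one_of_mem_cesex {f : EllInfty →L[ℝ] ℝ} (hf : f ∈ Cesex) : ‖f‖ ≤ 1 :=
  hf.2.map_one ▸ hf.1.norm_le

theorem exists_mem_cesex_tendsto {ι : Type*} (U : Ultrafilter ι) (g : ι → EllInfty →L[ℝ] ℝ)
    (hg : ∀ i, g i ∈ Cesex) : ∃ f ∈ Cesex, ∀ x, Tendsto (fun i => g i x) U (𝓝 (f x)) := by
  obtain ⟨f, hf⟩ := exists_tendsto_of_norm_le U g fun i => norm_le_one_of_mem_cesex (hg i)
  refine ⟨f, ⟨.of_tendsto (fun i => (hg i).1) hf, fun x c hc => ?_⟩, hf⟩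
  exact tendsto_nhds_unique (hf x) (tendsto_const_nhds.congr fun i => ((hg i).2 x c hc).symm)

theorem exists_mem_cesex_tendsto_Theta (G : Ultrafilter ℕ) (hG : IsFreeUltrafilter G) {θ : ℝ}
    (hθ : θ ∈ Set.Ioo 0 1) :
    ∃ g ∈ Cesex, ∀ x : EllInfty, Tendsto (fun n => Theta x θ n) G (𝓝 (g x)) := by
  obtain ⟨g, hg⟩ := exists_tendsto_of_norm_le G (thetaCLM θ hθ.2) (norm_thetaCLM_le hθ.2)
  have hGat : (G : Filter ℕ) ≤ atTop := Nat.cofinite_eq_atTop ▸ hG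
  refine ⟨g, ⟨.of_tendsto (fun n x hx => Theta_nonneg hθ.2.le hx n) hg, fun x c hc => ?_⟩, hg⟩
  exact tendsto_nhds_unique (hg x) ((tendsto_Theta_of_hasCesaro hθ hc).mono_left hGat)

theorem exists_isFreeUltrafilter_tendsto_limsup {y : ℕ → ℝ} {C : ℝ} (hy : ∀ n, |y n| ≤ C) :
    ∃ G : Ultrafilter ℕ, IsFreeUltrafilter G ∧ Tendsto y G (𝓝 (limsup y atTop)) := by
  have hcluster : MapClusterPt (limsup y atTop) atTop y :=
    MapClusterPt.limsup (isCoboundedUnder_le_of_le atTop fun n => (abs_le.1 (hy n)).1)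
      (isBoundedUnder_of ⟨C, fun n => (abs_le.1 (hy n)).2⟩)
  obtain ⟨G, hG, hlim⟩ := mapClusterPt_iff_ultrafilter.1 hcluster
  exact ⟨G, by rwa [IsFreeUltrafilter, Nat.cofinite_eq_atTop], hlim⟩

theorem stmt19_general (θs : ℕ → ℝ) (hθ : ∀ k, θs k ∈ Set.Ioo (0 : ℝ) 1)
    (F : Ultrafilter ℕ)
    (Gs : ℕ → Ultrafilter ℕ) (hGs : ∀ k, IsFreeUltrafilter (Gs k)) :
    (∃ f : EllInfty →L[ℝ] ℝ, IsPositiveFunctional f ∧ ExtendsCesaro f ∧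
      ∀ x : EllInfty, f x = ulim F (fun k => ulim (Gs k) (fun n => Theta (⇑x) (θs k) n))) ∧
    (∀ (x : EllInfty) (k : ℕ), ∃ G : Ultrafilter ℕ, IsFreeUltrafilter G ∧
      limsup (fun n => Theta (⇑x) (θs k) n) atTop
        = ulim G (fun n => Theta (⇑x) (θs k) n)) := by
  refine ⟨?_, fun x k => ?_⟩
  · choose g hgC hg using fun k => exists_mem_cesex_tendsto_Theta (Gs k) (hGs k) (hθ k)
    obtain ⟨f, hfC, hf⟩ := exists_mem_cesex_tendsto F g hgC
    refine ⟨f, hfC.1, hfC.2, fun x => ?_⟩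
    have hinner : (fun k => ulim (Gs k) (fun n => Theta x (θs k) n)) = fun k => g k x :=
      funext fun k => (hg k x).limUnder_eq
    rw [hinner]
    exact (hf x).limUnder_eq.symm
  · obtain ⟨G, hG, hlim⟩ :=
      exists_isFreeUltrafilter_tendsto_limsup (abs_Theta_le (hθ k).2 (abs_apply_le_norm x))
    exact ⟨G, hG, hlim.limUnder_eq.symm⟩

/-- (1) For a free ultrafilter `ℱ`, a sequence `(𝒢_k)` of free ultrafilters and
`θ_k → 1⁻` in `(0,1)`, the map `x ↦ ℱ-lim_k 𝒢_k-lim_n Θ_{θ_k,n}(x)` is a positive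
continuous linear functional on `ℓ∞` extending the Cesàro mean; (2) for each fixed
`x` and `k` there is a free ultrafilter `𝒢` along which the `𝒢`-limit of
`Θ_{θ_k,n}(x)` equals `limsup_{n→∞} Θ_{θ_k,n}(x)`. -/
theorem stmt19 (θs : ℕ → ℝ) (hθ : ∀ k, θs k ∈ Set.Ioo (0 : ℝ) 1)
    (hθlim : Tendsto θs atTop (𝓝 1)) (F : Ultrafilter ℕ) (hF : IsFreeUltrafilter F)
    (Gs : ℕ → Ultrafilter ℕ) (hGs : ∀ k, IsFreeUltrafilter (Gs k)) :
    (∃ f : EllInfty →L[ℝ] ℝ, IsPositiveFunctional f ∧ ExtendsCesaro f ∧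
      ∀ x : EllInfty, f x = ulim F (fun k => ulim (Gs k) (fun n => Theta (⇑x) (θs k) n))) ∧
    (∀ (x : EllInfty) (k : ℕ), ∃ G : Ultrafilter ℕ, IsFreeUltrafilter G ∧
      limsup (fun n => Theta (⇑x) (θs k) n) atTop
        = ulim G (fun n => Theta (⇑x) (θs k) n)) :=
  stmt19_general θs hθ F Gs hGs
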